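/- The origin is the only singular point of the affine hypersurface in A^4 defined by (x1^2 + x2^2 + x3^2)*x4 + x1^3 + x2^3 + x3^3 + x4^5 + x4^6 = 0: if a point (a1,a2,a3,a4) in C^4 satisfies f = 0 and ∂f/∂x1 = ∂f/∂x2 = ∂f/∂x3 = ∂f/∂x4 = 0, then a1 = a2 = a3 = a4 = 0. -/
import Mathlib


open MvPolynomial

lemma aux_a3 (k a3 : ℂ) (hk : k ≠ -1)
    (h1 : 4*k/27*a3^3 + a3^5 + a3^6 = 0)
    (h2 : 4*k/9*a3^2 + 5*a3^4 + 6*a3^5 = 0) : a3 = 0 := by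
  have h3 : a3^5 * (2 + 3*a3) = 0 := by linear_combination a3*h2 - 3*h1
  rcases mul_eq_zero.mp h3 with h | h
  · exact pow_eq_zero_iff (by norm_num) |>.mp h
  · exfalso
    apply hk
    have ha3 : a3 = -(2/3) := by linear_combination h/3
    rw [ha3] at h1
    linear_combination (-729/32) * h1

/-- The origin is the only singular point of the hypersurface
`(x1^2 + x2^2 + x3^2)*x4 + x1^3 + x2^3 + x3^3 + x4^5 + x4^6 = 0` in `𝔸⁴`. -/
theorem origin_only_singular_point_first_example
    (f : MvPolynomial (Fin 4) ℂ)
    (hf : f = (X 0 ^ 2 + X 1 ^ 2 + X 2 ^ 2) * X 3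
        + X 0 ^ 3 + X 1 ^ 3 + X 2 ^ 3 + X 3 ^ 5 + X 3 ^ 6)
    (a : Fin 4 → ℂ)
    (h0 : eval a f = 0)
    (hd : ∀ i : Fin 4, eval a (pderiv i f) = 0) :
    ∀ i : Fin 4, a i = 0 := by
  subst hf
  have e1 := hd 0
  have e2 := hd 1
  have e3 := hd 2
  have e4 := hd 3
  simp [pderiv_X, Pi.single_apply] at h0 e1 e2 e3 e4
  have f1 : a 0 = 0 ∨ a 0 = -(2/3) * a 3 := by
    rcases mul_eq_zero.mp (show a 0 * (2 * a 3 + 3 * a 0) = 0 by linear_combination e1) with h | h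
    · exact Or.inl h
    · exact Or.inr (by linear_combination h / 3)
  have f2 : a 1 = 0 ∨ a 1 = -(2/3) * a 3 := by
    rcases mul_eq_zero.mp (show a 1 * (2 * a 3 + 3 * a 1) = 0 by linear_combination e2) with h | h
    · exact Or.inl h
    · exact Or.inr (by linear_combination h / 3)
  have f3 : a 2 = 0 ∨ a 2 = -(2/3) * a 3 := by
    rcases mul_eq_zero.mp (show a 2 * (2 * a 3 + 3 * a 2) = 0 by linear_combination e3) with h | h
    · exact Or.inl h
    · exact Or.inr (by linear_combination h / 3)
  have ha3 : a 3 = 0 := by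
    rcases f1 with h1 | h1 <;> rcases f2 with h2 | h2 <;> rcases f3 with h3 | h3 <;>
      rw [h1, h2, h3] at h0 e4 <;>
      first
        | exact aux_a3 0 (a 3) (by norm_num) (by linear_combination h0) (by linear_combination e4)
        | exact aux_a3 1 (a 3) (by norm_num) (by linear_combination h0) (by linear_combination e4)
        | exact aux_a3 2 (a 3) (by norm_num) (by linear_combination h0) (by linear_combination e4)
        | exact aux_a3 3 (a 3) (by norm_num) (by linear_combination h0) (by linear_combination e4)
  intro i
  fin_cases i
  · show a 0 = 0
    rcases f1 with h | h
    · exact h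
    · rw [h, ha3]; ring
  · show a 1 = 0
    rcases f2 with h | h
    · exact h
    · rw [h, ha3]; ring
  · show a 2 = 0
    rcases f3 with h | h
    · exact h
    · rw [h, ha3]; ring
  · exact ha3
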